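/- arXiv:math/0606210 — 4 statements merged into one kernel-verified Lean document; each statement's English description precedes it below -/
import Mathlib

section
/- Let f = Σ_{k≥0} f_k z^k be a power series of one variable with |f_k| ≤ A (k+1)^m for all k (order of growth (A, m), A ≥ 1, m ≥ 1). Then its d-th derivative f^{(d)} has order of growth (A·2^{dm + d(d−1)/2}, m + d); that is, the coefficients c_k of f^{(d)} satisfy |c_k| ≤ A 2^{dm+d(d−1)/2} (k+1)^{m+d}. -/
/-!
The coefficient of `z^k` in `f^(d)` is `(k+1)(k+2)⋯(k+d) · f_{k+d}`. Each factor satisfies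
`k + 1 + i ≤ 2^i (k + 1)`, so the product is at most `2^{d(d-1)/2} (k+1)^d`; likewise
`k + d + 1 ≤ 2^d (k + 1)` turns the growth bound on `f_{k+d}` into `A 2^{dm} (k+1)^m`.
-/

open Nat Finset

lemma Nat.add_add_one_le_two_pow_mul (k d : ℕ) : k + d + 1 ≤ 2 ^ d * (k + 1) := by
  have hd : d < 2 ^ d := Nat.lt_two_pow_self
  have hk : k ≤ 2 ^ d * k := Nat.le_mul_of_pos_left k (Nat.two_pow_pos d)
  rw [Nat.mul_succ]
  omega

lemma Nat.ascFactorial_le_two_pow_mul_pow (k d : ℕ) :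
    (k + 1).ascFactorial d ≤ 2 ^ (d * (d - 1) / 2) * (k + 1) ^ d := by
  calc (k + 1).ascFactorial d = ∏ i ∈ range d, (k + i + 1) := by
        rw [ascFactorial_eq_prod_range]
        exact prod_congr rfl fun i _ => by ring
    _ ≤ ∏ i ∈ range d, 2 ^ i * (k + 1) :=
        prod_le_prod' fun i _ => Nat.add_add_one_le_two_pow_mul k i
    _ = 2 ^ (d * (d - 1) / 2) * (k + 1) ^ d := by
        rw [prod_mul_distrib, prod_pow_eq_pow_sum, sum_range_id, prod_const, card_range]

lemma norm_shift_le_of_norm_le_mul_pow {E : Type*} [SeminormedAddCommGroup E] {f : ℕ → E}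
    {A : ℝ} {m : ℕ} (hA : 0 ≤ A) (hf : ∀ k, ‖f k‖ ≤ A * ((k : ℝ) + 1) ^ m) (d k : ℕ) :
    ‖f (k + d)‖ ≤ A * 2 ^ (d * m) * ((k : ℝ) + 1) ^ m := by
  have hshift : ((k + d : ℕ) : ℝ) + 1 ≤ 2 ^ d * ((k : ℝ) + 1) := by
    exact_mod_cast Nat.add_add_one_le_two_pow_mul k d
  calc ‖f (k + d)‖ ≤ A * (((k + d : ℕ) : ℝ) + 1) ^ m := hf (k + d)
    _ ≤ A * (2 ^ d * ((k : ℝ) + 1)) ^ m := by gcongr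
    _ = A * 2 ^ (d * m) * ((k : ℝ) + 1) ^ m := by rw [mul_pow, ← pow_mul]; ring

theorem stmt7_general (f : ℕ → ℂ) (A : ℝ) (m d : ℕ)
    (hf : ∀ k, ‖f k‖ ≤ A * ((k : ℝ) + 1) ^ m) :
    ∀ k, ‖(((k + d).factorial / k.factorial : ℕ) : ℂ) * f (k + d)‖ ≤
      A * 2 ^ (d * m + d * (d - 1) / 2) * ((k : ℝ) + 1) ^ (m + d) := by
  intro k
  have hA : 0 ≤ A := by simpa using (norm_nonneg _).trans (hf 0)
  have hcoeff : (((k + d)! / k ! : ℕ) : ℝ) ≤ 2 ^ (d * (d - 1) / 2) * ((k : ℝ) + 1) ^ d := by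
    rw [← ascFactorial_eq_div]
    exact_mod_cast Nat.ascFactorial_le_two_pow_mul_pow k d
  rw [norm_mul, Complex.norm_natCast]
  calc (((k + d)! / k ! : ℕ) : ℝ) * ‖f (k + d)‖
      ≤ 2 ^ (d * (d - 1) / 2) * ((k : ℝ) + 1) ^ d * (A * 2 ^ (d * m) * ((k : ℝ) + 1) ^ m) :=
        mul_le_mul hcoeff (norm_shift_le_of_norm_le_mul_pow hA hf d k) (norm_nonneg _)
          (by positivity)
    _ = A * 2 ^ (d * m + d * (d - 1) / 2) * ((k : ℝ) + 1) ^ (m + d) := by ring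

theorem stmt7 (f : ℕ → ℂ) (A : ℝ) (m d : ℕ) (hA : 1 ≤ A) (hm : 1 ≤ m)
    (hf : ∀ k, ‖f k‖ ≤ A * ((k : ℝ) + 1) ^ m) :
    ∀ k, ‖(((k + d).factorial / k.factorial : ℕ) : ℂ) * f (k + d)‖ ≤
      A * 2 ^ (d * m + d * (d - 1) / 2) * ((k : ℝ) + 1) ^ (m + d) :=
  stmt7_general f A m d hf
end

section
/- Let f = Σ_k f_k z^k be a power series in g variables of order of growth (A, n) with A ≥ 1 and n ≥ (1,…,1). Let c = (c_1,…,c_g) with each |c_m| < 1, and define the recentered series F_c(y) = f(c + y ⋆ (1 − ‖c‖)), where (y ⋆ (1−‖c‖))_m = y_m (1 − |c_m|). Then F_c is a power series in y with order of growth (A_c, n + 1), where A_c = n! A e^{g + |n|_1} 2^{g + |n|_1} ∏_m (1 − |c_m|)^{−n_m − 2}. -/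
/-!
Bounding `‖f_l‖` by `A ∏ₘ (lₘ + 1) ^ nₘ`, the `k`-th coefficient of the recentered series is
dominated by `A` times a product over the coordinates of the one-variable series
`∑ⱼ (j + 1) ^ n (j choose k) r ^ (j - k) (1 - r) ^ k` with `r = ‖cₘ‖`. Since
`(j + 1) ^ n ≤ n! (j + n choose n)`,
`(j + n choose n) (j choose k) = (j + n choose n + k) (n + k choose n)` and
`(n + k choose n) ≤ (k + 1) ^ n`, that series is at most `n! (k + 1) ^ n (1 - r) ^ k` times
`∑ⱼ (j + n choose n + k) r ^ (j - k) = (1 - r) ^ (-(n + k + 1))`, i.e. at most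
`n! (k + 1) ^ n / (1 - r) ^ (n + 1)`. This is sharper than the stated constant, and no Cauchy
estimate is needed.
-/

open Finset
open scoped Nat

theorem Nat.succ_pow_mul_choose_le (n k l : ℕ) :
    (l + 1) ^ n * l.choose k ≤ n ! * (k + 1) ^ n * (l + n).choose (n + k) := by
  have hchoose : (l + n).choose n * l.choose k = (l + n).choose (n + k) * (n + k).choose n := by
    simpa using (Nat.choose_mul (n := l + n) (Nat.le_add_right n k)).symm
  calc (l + 1) ^ n * l.choose k ≤ (l + n).descFactorial n * l.choose k := by
        gcongr
        simpa [Nat.add_right_comm l n 1] using Nat.pow_sub_le_descFactorial (l + n) n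
    _ = n ! * ((l + n).choose (n + k) * (n + k).choose n) := by
        rw [Nat.descFactorial_eq_factorial_mul_choose, mul_assoc, hchoose]
    _ ≤ n ! * ((l + n).choose (n + k) * (k + 1) ^ n) := by
        gcongr; simpa [add_comm] using Nat.choose_add_le_add_one_pow k n
    _ = n ! * (k + 1) ^ n * (l + n).choose (n + k) := by ring

theorem hasSum_choose_add_mul_pow_sub {𝕜 : Type*} [NormedField 𝕜] [CompleteSpace 𝕜]
    (n k : ℕ) {r : 𝕜} (hr : ‖r‖ < 1) :
    HasSum (fun j : ℕ ↦ ((j + n).choose (n + k) : 𝕜) * r ^ (j - k))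
      (1 / (1 - r) ^ (n + k + 1)) := by
  rw [← hasSum_nat_add_iff' k]
  have hvanish : ∀ i ∈ range k, ((i + n).choose (n + k) : 𝕜) * r ^ (i - k) = 0 := by
    intro i hi
    rw [Nat.choose_eq_zero_of_lt (by simp at hi; omega), Nat.cast_zero, zero_mul]
  simpa [sum_eq_zero hvanish, add_assoc, add_comm k n] using
    hasSum_choose_mul_geometric_of_norm_lt_one (n + k) hr

section RecenteredWeight

variable (n k : ℕ) {r : ℝ}

theorem succ_pow_mul_choose_mul_pow_le (hr0 : 0 ≤ r) (hr1 : r ≤ 1) (j : ℕ) :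
    ((j : ℝ) + 1) ^ n * (j.choose k * r ^ (j - k) * (1 - r) ^ k) ≤
      n ! * (k + 1) ^ n * (1 - r) ^ k * ((j + n).choose (n + k) * r ^ (j - k)) := by
  have h := Nat.cast_le (α := ℝ) |>.mpr (Nat.succ_pow_mul_choose_le n k j)
  push_cast at h
  have : 0 ≤ 1 - r := by linarith
  calc ((j : ℝ) + 1) ^ n * (j.choose k * r ^ (j - k) * (1 - r) ^ k)
      = (j + 1) ^ n * j.choose k * (r ^ (j - k) * (1 - r) ^ k) := by ring
    _ ≤ n ! * (k + 1) ^ n * (j + n).choose (n + k) * (r ^ (j - k) * (1 - r) ^ k) := by gcongr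
    _ = _ := by ring

theorem summable_succ_pow_mul_choose_mul_pow (hr0 : 0 ≤ r) (hr1 : r < 1) :
    Summable fun j : ℕ ↦ ((j : ℝ) + 1) ^ n * (j.choose k * r ^ (j - k) * (1 - r) ^ k) := by
  have hsum := (hasSum_choose_add_mul_pow_sub n k (by rwa [Real.norm_of_nonneg hr0])).mul_left
    (n ! * (k + 1) ^ n * (1 - r) ^ k)
  have : 0 ≤ 1 - r := by linarith
  exact hsum.summable.of_nonneg_of_le (fun _ ↦ by positivity)
    (succ_pow_mul_choose_mul_pow_le n k hr0 hr1.le)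

theorem tsum_succ_pow_mul_choose_mul_pow_le (hr0 : 0 ≤ r) (hr1 : r < 1) :
    ∑' j : ℕ, ((j : ℝ) + 1) ^ n * (j.choose k * r ^ (j - k) * (1 - r) ^ k) ≤
      n ! * (k + 1) ^ n / (1 - r) ^ (n + 1) := by
  have hsum := (hasSum_choose_add_mul_pow_sub n k (by rwa [Real.norm_of_nonneg hr0])).mul_left
    (n ! * (k + 1) ^ n * (1 - r) ^ k)
  have hr : 1 - r ≠ 0 := by linarith
  calc _ ≤ n ! * (k + 1) ^ n * (1 - r) ^ k * (1 / (1 - r) ^ (n + k + 1)) := by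
        rw [← hsum.tsum_eq]
        exact (summable_succ_pow_mul_choose_mul_pow n k hr0 hr1).tsum_le_tsum
          (succ_pow_mul_choose_mul_pow_le n k hr0 hr1.le) hsum.summable
    _ = n ! * (k + 1) ^ n / (1 - r) ^ (n + 1) := by field_simp; ring

end RecenteredWeight

theorem Finset.sum_prod_apply_le_prod_tsum {ι α : Type*} [Fintype ι] {h : ι → α → ℝ}
    (h0 : ∀ i a, 0 ≤ h i a) (hs : ∀ i, Summable (h i)) (u : Finset (ι → α)) :
    ∑ x ∈ u, ∏ i, h i (x i) ≤ ∏ i, ∑' a, h i a := by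
  classical
  let t : ι → Finset α := fun i ↦ u.image (· i)
  calc ∑ x ∈ u, ∏ i, h i (x i) ≤ ∑ x ∈ Fintype.piFinset t, ∏ i, h i (x i) := by
        refine sum_le_sum_of_subset_of_nonneg (fun x hx ↦ ?_) fun x _ _ ↦
          prod_nonneg fun i _ ↦ h0 i _
        exact Fintype.mem_piFinset.mpr fun i ↦ mem_image_of_mem _ hx
    _ = ∏ i, ∑ a ∈ t i, h i a := (prod_univ_sum t h).symm
    _ ≤ ∏ i, ∑' a, h i a :=
        prod_le_prod (fun i _ ↦ sum_nonneg fun a _ ↦ h0 i a)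
          fun i _ ↦ (hs i).sum_le_tsum _ fun a _ ↦ h0 i a

theorem norm_tsum_le_mul_prod_tsum {ι M E : Type*} [Fintype ι] [Zero M]
    [SeminormedAddCommGroup E] {F : (ι →₀ M) → E} {A : ℝ} {h : ι → M → ℝ} (hA : 0 ≤ A)
    (h0 : ∀ i a, 0 ≤ h i a) (hs : ∀ i, Summable (h i)) (hF : ∀ l, ‖F l‖ ≤ A * ∏ i, h i (l i)) :
    ‖∑' l, F l‖ ≤ A * ∏ i, ∑' a, h i a := by
  have hsum_le (u : Finset (ι →₀ M)) : ∑ l ∈ u, ∏ i, h i (l i) ≤ ∏ i, ∑' a, h i a := by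
    simpa using sum_prod_apply_le_prod_tsum h0 hs (u.map ⟨DFunLike.coe, DFunLike.coe_injective⟩)
  have hnonneg : (0 : (ι →₀ M) → ℝ) ≤ fun l ↦ ∏ i, h i (l i) :=
    fun l ↦ prod_nonneg fun i _ ↦ h0 i _
  calc ‖∑' l, F l‖ ≤ ∑' l : ι →₀ M, A * ∏ i, h i (l i) :=
        tsum_of_norm_bounded ((summable_of_sum_le hnonneg hsum_le).mul_left A).hasSum hF
    _ = A * ∑' l : ι →₀ M, ∏ i, h i (l i) := tsum_mul_left
    _ ≤ A * ∏ i, ∑' a, h i a := by gcongr; exact Real.tsum_le_of_sum_le hnonneg hsum_le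

theorem Complex.norm_choose_mul_pow_mul_ofReal_pow {z : ℂ} (hz : ‖z‖ ≤ 1) (j k : ℕ) :
    ‖(j.choose k : ℂ) * z ^ (j - k) * ((1 - ‖z‖ : ℝ) : ℂ) ^ k‖ =
      j.choose k * ‖z‖ ^ (j - k) * (1 - ‖z‖) ^ k := by
  rw [norm_mul, norm_mul, norm_pow, norm_pow, norm_natCast, norm_real,
    Real.norm_of_nonneg (by linarith)]

theorem norm_mul_prod_choose_mul_pow_le {ι : Type*} [Fintype ι] {a : ℂ} {A : ℝ} {n k l : ι → ℕ}
    {c : ι → ℂ} (hc : ∀ m, ‖c m‖ ≤ 1) (ha : ‖a‖ ≤ A * ∏ m, ((l m : ℝ) + 1) ^ n m) :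
    ‖a * ∏ m, ((l m).choose (k m) : ℂ) * c m ^ (l m - k m) * ((1 - ‖c m‖ : ℝ) : ℂ) ^ k m‖ ≤
      A * ∏ m, ((l m : ℝ) + 1) ^ n m *
        ((l m).choose (k m) * ‖c m‖ ^ (l m - k m) * (1 - ‖c m‖) ^ k m) := by
  rw [norm_mul, norm_prod, prod_mul_distrib, ← mul_assoc]
  simp only [Complex.norm_choose_mul_pow_mul_ofReal_pow (hc _)]
  exact mul_le_mul_of_nonneg_right ha
    (prod_nonneg fun m _ ↦ by have := sub_nonneg.mpr (hc m); positivity)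

theorem factorial_mul_succ_pow_div_pow_le (n k : ℕ) {t : ℝ} (ht0 : 0 < t) (ht1 : t ≤ 1) :
    n ! * ((k : ℝ) + 1) ^ n / t ^ (n + 1) ≤
      n ! * Real.exp (1 + n) * 2 ^ (1 + n) / t ^ (n + 2) * ((k : ℝ) + 1) ^ (n + 1) := by
  have hk : (1 : ℝ) ≤ k + 1 := by simp
  have hexp : (1 : ℝ) ≤ Real.exp (1 + n) := Real.one_le_exp (by positivity)
  have htwo : (1 : ℝ) ≤ 2 ^ (1 + n) := one_le_pow₀ one_le_two
  rw [div_mul_eq_mul_div]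
  gcongr ?_ / ?_
  · calc (n ! : ℝ) * (k + 1) ^ n = n ! * 1 * 1 * (k + 1) ^ n := by ring
      _ ≤ n ! * Real.exp (1 + n) * 2 ^ (1 + n) * (k + 1) ^ (n + 1) := by
        gcongr
        omega
  · exact pow_le_pow_of_le_one ht0.le ht1 (by omega)

theorem mul_prod_factorial_exp_two_pow_div_eq {ι : Type*} [Fintype ι] (A : ℝ) (n k : ι → ℕ)
    (t : ι → ℝ) :
    (((∏ m, (n m)! : ℕ) : ℝ) * A * Real.exp (Fintype.card ι + ∑ m, (n m : ℝ)) *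
        2 ^ (Fintype.card ι + ∑ m, n m) / ∏ m, t m ^ (n m + 2)) *
      ∏ m, ((k m : ℝ) + 1) ^ (n m + 1) =
      A * ∏ m, ((n m)! * Real.exp (1 + n m) * 2 ^ (1 + n m) / t m ^ (n m + 2) *
        ((k m : ℝ) + 1) ^ (n m + 1)) := by
  have hexp : Real.exp (Fintype.card ι + ∑ m, (n m : ℝ)) = ∏ m, Real.exp (1 + n m) := by
    rw [← Real.exp_sum, sum_add_distrib, sum_const, card_univ, nsmul_one]
  have htwo : (2 : ℝ) ^ (Fintype.card ι + ∑ m, n m) = ∏ m, (2 : ℝ) ^ (1 + n m) := by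
    rw [prod_pow_eq_pow_sum, sum_add_distrib, sum_const, card_univ, smul_eq_mul, mul_one]
  simp only [prod_mul_distrib, prod_div_distrib, Nat.cast_prod, hexp, htwo]
  ring

theorem stmt12_general (g : ℕ) (f : (Fin g →₀ ℕ) → ℂ) (A : ℝ) (n : Fin g → ℕ)
    (hf : ∀ k : Fin g →₀ ℕ, ‖f k‖ ≤ A * ∏ m, ((k m : ℝ) + 1) ^ n m)
    (c : Fin g → ℂ) (hc : ∀ m, ‖c m‖ < 1) :
    ∀ k : Fin g →₀ ℕ,
      ‖∑' l : Fin g →₀ ℕ, f l *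
          ∏ m, ((l m).choose (k m) : ℂ) * c m ^ (l m - k m) * ((1 - ‖c m‖ : ℝ) : ℂ) ^ k m‖ ≤
        (((∏ m, (n m).factorial : ℕ) : ℝ) * A * Real.exp ((g : ℝ) + ∑ m, (n m : ℝ)) *
            2 ^ (g + ∑ m, n m) / ∏ m, (1 - ‖c m‖) ^ (n m + 2)) *
          ∏ m, ((k m : ℝ) + 1) ^ (n m + 1) := by
  intro k
  have hA : 0 ≤ A := by simpa using (norm_nonneg _).trans (hf 0)
  have hr0 (m) : 0 ≤ ‖c m‖ := norm_nonneg _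
  have ht (m) : 0 < 1 - ‖c m‖ := by linarith [hc m]
  calc _ ≤ A * ∏ m, ∑' j : ℕ, ((j : ℝ) + 1) ^ n m *
          (j.choose (k m) * ‖c m‖ ^ (j - k m) * (1 - ‖c m‖) ^ k m) :=
        norm_tsum_le_mul_prod_tsum hA (fun m j ↦ by have := ht m; positivity)
          (fun m ↦ summable_succ_pow_mul_choose_mul_pow _ _ (hr0 m) (hc m))
          fun l ↦ norm_mul_prod_choose_mul_pow_le (fun m ↦ (hc m).le) (hf l)
    _ ≤ A * ∏ m, ((n m)! * ((k m : ℝ) + 1) ^ n m / (1 - ‖c m‖) ^ (n m + 1)) := by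
        gcongr with m
        · exact fun m _ ↦ tsum_nonneg fun j ↦ by have := ht m; positivity
        · exact tsum_succ_pow_mul_choose_mul_pow_le _ _ (hr0 m) (hc m)
    _ ≤ A * ∏ m, ((n m)! * Real.exp (1 + n m) * 2 ^ (1 + n m) / (1 - ‖c m‖) ^ (n m + 2) *
          ((k m : ℝ) + 1) ^ (n m + 1)) := by
        gcongr with m
        · exact fun m _ ↦ div_nonneg (by positivity) (pow_nonneg (ht m).le _)
        · exact factorial_mul_succ_pow_div_pow_le _ _ (ht m) (by linarith [hr0 m])
    _ = _ := by simpa using (mul_prod_factorial_exp_two_pow_div_eq A n k (fun m ↦ 1 - ‖c m‖)).symm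

theorem stmt12 (g : ℕ) (f : (Fin g →₀ ℕ) → ℂ) (A : ℝ) (n : Fin g → ℕ)
    (hA : 1 ≤ A) (hn : ∀ m, 1 ≤ n m)
    (hf : ∀ k : Fin g →₀ ℕ, ‖f k‖ ≤ A * ∏ m, ((k m : ℝ) + 1) ^ n m)
    (c : Fin g → ℂ) (hc : ∀ m, ‖c m‖ < 1) :
    ∀ k : Fin g →₀ ℕ,
      ‖∑' l : Fin g →₀ ℕ, f l *
          ∏ m, ((l m).choose (k m) : ℂ) * c m ^ (l m - k m) * ((1 - ‖c m‖ : ℝ) : ℂ) ^ k m‖ ≤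
        (((∏ m, (n m).factorial : ℕ) : ℝ) * A * Real.exp ((g : ℝ) + ∑ m, (n m : ℝ)) *
            2 ^ (g + ∑ m, n m) / ∏ m, (1 - ‖c m‖) ^ (n m + 2)) *
          ∏ m, ((k m : ℝ) + 1) ^ (n m + 1) :=
  stmt12_general g f A n hf c hc
end

section
/- (Analytic continuation to the son disk.) There is an effective positive constant c₁₂ such that: if f(z) is a power series of one variable with order of growth (A, n) (A ≥ 1, n ≥ 1), D_c ⊂ D(0,1) is the balanced disk of center c (radius r = (1−|c|)/2), |f| ≤ ε on D_c with 0 < ε < 1, and −log ε ≥ c₁₂ (log A + n² |log r|), then |f| ≤ ε^{1/20} on the son disk D_{c'}. -/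
/-!
Write `F z = ∑ f k z^k` and `r = (1 - ‖c‖) / 2`, and expand `F` around `c`. Cauchy's estimate on
the circle of radius `7r/8`, which lies in `D_c` where `|F| ≤ ε`, bounds the `k`-th Taylor
coefficient by `ε (7r/8)^{-k}`; on the circle of radius `15r/8`, which lies in `|w| ≤ 1 - r/8` where
the growth condition gives `|F| ≤ A n! (8/r)^{n+1} ≤ A r^{-9n²}`, it bounds it by
`A r^{-9n²} (15r/8)^{-k}`. The son disk lies in the closed disk of radius `7r/4` about `c`, so at a
point of it the first `u = ⌈-log ε⌉` Taylor terms contribute at most `ε 2^u` and the others at most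
`15 A r^{-9n²} (14/15)^u`; both are at most `ε^{1/20} / 2` once
`-log ε ≥ 1000 (log A + n² |log r|)`.
-/

open Metric Real Finset FormalMultilinearSeries
open scoped Nat NNReal

lemma one_add_pow_le_factorial_mul_choose (k n : ℕ) :
    ((k : ℝ) + 1) ^ n ≤ n ! * (k + n).choose n := by
  have h : (k + 1) ^ n ≤ n ! * (k + n).choose n :=
    Nat.ascFactorial_eq_factorial_mul_choose k n ▸ Nat.pow_succ_le_ascFactorial (k + 1) n
  exact_mod_cast h

lemma factorial_div_pow_le {r : ℝ} (hr0 : 0 < r) (hr : r ≤ 1 / 2) {n : ℕ} (hn : 1 ≤ n) :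
    n ! / (r / 8) ^ (n + 1) ≤ r⁻¹ ^ (9 * n ^ 2) := by
  have h2 : 2 ≤ r⁻¹ := by rw [le_inv_comm₀ two_pos hr0]; linarith
  have h1 : 1 ≤ r⁻¹ := by linarith
  have hfact : (n ! : ℝ) ≤ r⁻¹ ^ n ^ 2 := by
    have : n ! ≤ 2 ^ n ^ 2 := by
      calc n ! ≤ n ^ n := Nat.factorial_le_pow n
        _ ≤ (2 ^ n) ^ n := Nat.pow_le_pow_left Nat.lt_two_pow_self.le n
        _ = 2 ^ n ^ 2 := by rw [← pow_mul, sq]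
    calc (n ! : ℝ) ≤ 2 ^ n ^ 2 := by exact_mod_cast this
      _ ≤ r⁻¹ ^ n ^ 2 := by gcongr
  have hbase : (r / 8)⁻¹ ≤ r⁻¹ ^ 4 := by
    calc (r / 8)⁻¹ = 2 ^ 3 * r⁻¹ := by rw [inv_div, div_eq_mul_inv]; norm_num
      _ ≤ r⁻¹ ^ 3 * r⁻¹ := by gcongr
      _ = r⁻¹ ^ 4 := by ring
  calc n ! / (r / 8) ^ (n + 1) = n ! * (r / 8)⁻¹ ^ (n + 1) := by rw [div_eq_mul_inv, inv_pow]
    _ ≤ r⁻¹ ^ n ^ 2 * (r⁻¹ ^ 4) ^ (n + 1) := by gcongr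
    _ = r⁻¹ ^ (n ^ 2 + 4 * (n + 1)) := by rw [← pow_mul, pow_add]
    _ ≤ r⁻¹ ^ (9 * n ^ 2) := pow_le_pow_right₀ h1 (by nlinarith)

section Growth

variable {𝕜 : Type*} [NontriviallyNormedField 𝕜] {f : ℕ → 𝕜} {A : ℝ} {n : ℕ}

lemma norm_mul_pow_le_of_growth (hf : ∀ k, ‖f k‖ ≤ A * ((k : ℝ) + 1) ^ n) {t : ℝ} (ht : 0 ≤ t)
    (k : ℕ) : ‖f k‖ * t ^ k ≤ A * n ! * ((k + n).choose n * t ^ k) := by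
  have hA : 0 ≤ A := (norm_nonneg _).trans (by simpa using hf 0)
  calc ‖f k‖ * t ^ k ≤ A * ((k : ℝ) + 1) ^ n * t ^ k := by gcongr; exact hf k
    _ ≤ A * (n ! * (k + n).choose n) * t ^ k := by
        gcongr; exact one_add_pow_le_factorial_mul_choose k n
    _ = A * n ! * ((k + n).choose n * t ^ k) := by ring

lemma summable_norm_mul_pow_of_growth (hf : ∀ k, ‖f k‖ ≤ A * ((k : ℝ) + 1) ^ n) {t : ℝ}
    (ht0 : 0 ≤ t) (ht : t < 1) : Summable fun k ↦ ‖f k‖ * t ^ k :=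
  ((summable_choose_mul_geometric_of_norm_lt_one n (by rwa [norm_of_nonneg ht0])).mul_left
    (A * n !)).of_nonneg_of_le (fun k ↦ by positivity) (norm_mul_pow_le_of_growth hf ht0)

lemma tsum_norm_mul_pow_le_of_growth (hf : ∀ k, ‖f k‖ ≤ A * ((k : ℝ) + 1) ^ n) {t : ℝ}
    (ht0 : 0 ≤ t) (ht : t < 1) : ∑' k, ‖f k‖ * t ^ k ≤ A * n ! / (1 - t) ^ (n + 1) := by
  have hgeom := (hasSum_choose_mul_geometric_of_norm_lt_one n
    (by rwa [norm_of_nonneg ht0] : ‖t‖ < 1)).mul_left (A * n !)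
  refine ((summable_norm_mul_pow_of_growth hf ht0 ht).tsum_le_tsum
    (norm_mul_pow_le_of_growth hf ht0) hgeom.summable).trans_eq ?_
  rw [hgeom.tsum_eq, mul_one_div]

lemma one_le_radius_ofScalars_of_growth (hf : ∀ k, ‖f k‖ ≤ A * ((k : ℝ) + 1) ^ n) :
    1 ≤ (ofScalars 𝕜 f).radius := by
  refine ENNReal.le_of_forall_nnreal_lt fun t ht ↦ le_radius_of_summable _ ?_
  simpa only [ofScalars_norm] using
    summable_norm_mul_pow_of_growth hf t.coe_nonneg (by exact_mod_cast ht)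

lemma norm_tsum_mul_pow_le_of_growth (hf : ∀ k, ‖f k‖ ≤ A * ((k : ℝ) + 1) ^ n) {z : 𝕜}
    {t : ℝ} (hz : ‖z‖ ≤ t) (ht : t < 1) :
    ‖∑' k, f k * z ^ k‖ ≤ A * n ! / (1 - t) ^ (n + 1) := by
  have ht0 : 0 ≤ t := (norm_nonneg z).trans hz
  have hterm (k : ℕ) : ‖f k * z ^ k‖ ≤ ‖f k‖ * t ^ k := by
    rw [norm_mul, norm_pow]; gcongr
  exact (tsum_of_norm_bounded (summable_norm_mul_pow_of_growth hf ht0 ht).hasSum hterm).trans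
    (tsum_norm_mul_pow_le_of_growth hf ht0 ht)

lemma norm_tsum_mul_pow_le_inv_pow (hf : ∀ k, ‖f k‖ ≤ A * ((k : ℝ) + 1) ^ n) (hn : 1 ≤ n)
    {r : ℝ} (hr0 : 0 < r) (hr : r ≤ 1 / 2) {w : 𝕜} (hw : ‖w‖ ≤ 1 - r / 8) :
    ‖∑' k, f k * w ^ k‖ ≤ A * r⁻¹ ^ (9 * n ^ 2) := by
  have hA : 0 ≤ A := (norm_nonneg _).trans (by simpa using hf 0)
  calc ‖∑' k, f k * w ^ k‖ ≤ A * n ! / (1 - (1 - r / 8)) ^ (n + 1) :=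
        norm_tsum_mul_pow_le_of_growth hf hw (by linarith)
    _ = A * (n ! / (r / 8) ^ (n + 1)) := by rw [sub_sub_cancel, mul_div_assoc]
    _ ≤ A * r⁻¹ ^ (9 * n ^ 2) := by gcongr; exact factorial_div_pow_le hr0 hr hn

lemma differentiableOn_tsum_mul_pow_of_growth [CompleteSpace 𝕜]
    (hf : ∀ k, ‖f k‖ ≤ A * ((k : ℝ) + 1) ^ n) :
    DifferentiableOn 𝕜 (fun z ↦ ∑' k, f k * z ^ k) (ball 0 1) := by
  have hr := one_le_radius_ofScalars_of_growth hf
  have hp := (ofScalars 𝕜 f).hasFPowerSeriesOnBall (zero_lt_one.trans_le hr)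
  rw [← ofScalarsSum, ofScalarsSum_eq_tsum] at hp
  simp only [smul_eq_mul] at hp
  refine hp.differentiableOn.mono fun z hz ↦ eball_subset_eball hr ?_
  rwa [← ENNReal.ofReal_one, eball_ofReal]

end Growth

lemma summable_and_tsum_le_of_two_geometric_bounds {a : ℕ → ℝ} {ε M x s : ℝ} (u : ℕ)
    (h0 : ∀ k, 0 ≤ a k) (hε : ∀ k, a k ≤ ε * x ^ k) (hM : ∀ k, a k ≤ M * s ^ k)
    (hs0 : 0 ≤ s) (hs : s < 1) :
    Summable a ∧ ∑' k, a k ≤ ε * ∑ k ∈ range u, x ^ k + M * s ^ u / (1 - s) := by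
  have hgeom : HasSum (fun k ↦ M * s ^ (k + u)) (M * s ^ u / (1 - s)) := by
    have h := (hasSum_geometric_of_lt_one hs0 hs).mul_left (M * s ^ u)
    have e : (fun k ↦ M * s ^ u * s ^ k) = fun k ↦ M * s ^ (k + u) := funext fun k ↦ by ring
    rwa [e, ← div_eq_mul_inv] at h
  have ha : Summable a :=
    ((summable_nat_add_iff (f := fun k ↦ M * s ^ k) u).1 hgeom.summable).of_nonneg_of_le h0 hM
  refine ⟨ha, ?_⟩
  rw [← ha.sum_add_tsum_nat_add u, mul_sum]
  gcongr with k
  · exact hε k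
  · exact ((summable_nat_add_iff u).2 ha).tsum_le_tsum (fun k ↦ hM (k + u)) hgeom.summable
      |>.trans_eq hgeom.tsum_eq

section Cauchy

variable {E : Type*} [NormedAddCommGroup E] [NormedSpace ℂ E] {F : ℂ → E} {c : ℂ}

lemma norm_cauchyPowerSeries_le_of_forall_sphere {R C : ℝ} (hR : 0 ≤ R)
    (hF : ∀ w ∈ sphere c R, ‖F w‖ ≤ C) (k : ℕ) :
    ‖cauchyPowerSeries F c R k‖ ≤ C * R⁻¹ ^ k := by
  have hint : ∫ θ in (0)..2 * π, ‖F (circleMap c R θ)‖ ≤ C * (2 * π) := by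
    refine (le_abs_self _).trans ?_
    simpa [abs_of_pos two_pi_pos] using intervalIntegral.norm_integral_le_of_norm_le_const
      (a := 0) (b := 2 * π) fun θ _ ↦ (norm_norm (F (circleMap c R θ))).trans_le
        (hF _ (circleMap_mem_sphere c hR θ))
  have hmean : (2 * π)⁻¹ * ∫ θ in (0)..2 * π, ‖F (circleMap c R θ)‖ ≤ C := by
    rw [inv_mul_le_iff₀ two_pi_pos]; linarith
  calc ‖cauchyPowerSeries F c R k‖
      ≤ ((2 * π)⁻¹ * ∫ θ in (0)..2 * π, ‖F (circleMap c R θ)‖) * |R|⁻¹ ^ k :=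
        norm_cauchyPowerSeries_le F c R k
    _ ≤ C * R⁻¹ ^ k := by rw [abs_of_nonneg hR]; gcongr

variable [CompleteSpace E]

lemma cauchyPowerSeries_eq_of_le {R₁ R₂ : ℝ} (hF : DifferentiableOn ℂ F (closedBall c R₂))
    (hR₁ : 0 < R₁) (hR₁₂ : R₁ ≤ R₂) : cauchyPowerSeries F c R₁ = cauchyPowerSeries F c R₂ := by
  have h (R : ℝ) (hR : 0 < R) (hRR : R ≤ R₂) :
      HasFPowerSeriesAt F (cauchyPowerSeries F c R) c := by
    lift R to ℝ≥0 using hR.le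
    exact ((hF.mono (closedBall_subset_closedBall hRR)).hasFPowerSeriesOnBall
      (mod_cast hR)).hasFPowerSeriesAt
  exact (h R₁ hR₁ hR₁₂).eq_formalMultilinearSeries (h R₂ (hR₁.trans_le hR₁₂) le_rfl)

lemma norm_le_of_bound_on_two_spheres {R₁ R₂ ρ ε M : ℝ} {y : ℂ} (u : ℕ)
    (hF : DifferentiableOn ℂ F (closedBall c R₂)) (hR₁ : 0 < R₁) (hR₁₂ : R₁ ≤ R₂)
    (hε : ∀ w ∈ sphere c R₁, ‖F w‖ ≤ ε) (hM : ∀ w ∈ sphere c R₂, ‖F w‖ ≤ M)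
    (hy : ‖y‖ ≤ ρ) (hρ : ρ < R₂) :
    ‖F (c + y)‖ ≤ ε * ∑ k ∈ range u, (ρ / R₁) ^ k + M * (ρ / R₂) ^ u / (1 - ρ / R₂) := by
  have hR₂ : 0 < R₂ := hR₁.trans_le hR₁₂
  have hρ0 : 0 ≤ ρ := (norm_nonneg y).trans hy
  have hsum : HasSum (fun k ↦ cauchyPowerSeries F c R₂ k fun _ ↦ y) (F (c + y)) := by
    lift R₂ to ℝ≥0 using hR₂.le
    refine (hF.hasFPowerSeriesOnBall (mod_cast hR₂)).hasSum ?_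
    rw [mem_eball, edist_zero_right, enorm_eq_nnnorm, ENNReal.coe_lt_coe, ← NNReal.coe_lt_coe,
      coe_nnnorm]
    exact hy.trans_lt hρ
  have hterm (C R : ℝ) (hR : 0 < R) (hC : ∀ w ∈ sphere c R, ‖F w‖ ≤ C) (k : ℕ) :
      ‖cauchyPowerSeries F c R k fun _ ↦ y‖ ≤ C * (ρ / R) ^ k := by
    have hq := norm_cauchyPowerSeries_le_of_forall_sphere hR.le hC k
    calc ‖cauchyPowerSeries F c R k fun _ ↦ y‖
        ≤ ‖cauchyPowerSeries F c R k‖ * ∏ _i : Fin k, ‖y‖ := (cauchyPowerSeries F c R k).le_opNorm _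
      _ ≤ C * R⁻¹ ^ k * ρ ^ k := by
          rw [prod_const, card_univ, Fintype.card_fin]
          exact mul_le_mul hq (pow_le_pow_left₀ (norm_nonneg y) hy k) (by positivity)
            ((norm_nonneg _).trans hq)
      _ = C * (ρ / R) ^ k := by rw [div_eq_inv_mul, mul_pow, mul_assoc]
  have hε' := hterm ε R₁ hR₁ hε
  rw [cauchyPowerSeries_eq_of_le hF hR₁ hR₁₂] at hε'
  obtain ⟨hs, hle⟩ := summable_and_tsum_le_of_two_geometric_bounds u (fun k ↦ norm_nonneg _)
    hε' (hterm M R₂ hR₂ hM) (by positivity) ((div_lt_one hR₂).2 hρ)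
  exact hsum.tsum_eq ▸ (tsum_of_norm_bounded hs.hasSum fun k ↦ le_rfl).trans hle

end Cauchy

-- Center and radius of the son of the balanced disk `D(c, (1 - ‖c‖) / 2)`.
noncomputable def sonCenter (c : ℂ) : ℂ :=
  if 1 / 5 < ‖c‖ then (((‖c‖ - (1 - ‖c‖) / 4) / ‖c‖ : ℝ) : ℂ) * c else 0

noncomputable def sonRadius (c : ℂ) : ℝ :=
  if 1 / 5 < ‖c‖ then 5 / 4 * ((1 - ‖c‖) / 2) else 1 / 2

lemma norm_sub_le_of_mem_son {c z : ℂ} (hc1 : ‖c‖ ≤ 1) (hz : ‖z - sonCenter c‖ < sonRadius c) :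
    ‖z - c‖ ≤ 7 / 4 * ((1 - ‖c‖) / 2) := by
  have htri : ‖z - c‖ ≤ ‖z - sonCenter c‖ + ‖sonCenter c - c‖ :=
    norm_sub_le_norm_sub_add_norm_sub _ _ _
  unfold sonCenter sonRadius at *
  split_ifs at * with h
  · have hc : ‖c‖ ≠ 0 := by positivity
    have hshift : ‖(((‖c‖ - (1 - ‖c‖) / 4) / ‖c‖ : ℝ) : ℂ) * c - c‖ = (1 - ‖c‖) / 4 := by
      have e : (((‖c‖ - (1 - ‖c‖) / 4) / ‖c‖ : ℝ) : ℂ) * c - c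
          = ((-((1 - ‖c‖) / 4) / ‖c‖ : ℝ) : ℂ) * c := by
        rw [← sub_one_mul, ← Complex.ofReal_one, ← Complex.ofReal_sub, div_sub_one hc]
        ring_nf
      rw [e, norm_mul, Complex.norm_real, norm_div, norm_neg, norm_norm, div_mul_cancel₀ _ hc,
        norm_of_nonneg (by linarith)]
    linarith
  · rw [zero_sub, norm_neg] at htri
    linarith

lemma mul_sum_range_two_pow_le_rpow {ε : ℝ} (hε : 0 < ε) (hL : 6 ≤ -log ε) :
    ε * ∑ k ∈ range ⌈-log ε⌉₊, (2 : ℝ) ^ k ≤ ε ^ (1 / 20 : ℝ) / 2 := by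
  set u := ⌈-log ε⌉₊
  have hu : (u : ℝ) ≤ -log ε + 1 := (Nat.ceil_lt_add_one (by linarith)).le
  have hsum : ∑ k ∈ range u, (2 : ℝ) ^ k ≤ 2 ^ u := by
    rw [geom_sum_eq (by norm_num)]; norm_num
  have hlog : log (ε * 2 ^ u) ≤ log (ε ^ (1 / 20 : ℝ) / 2) := by
    rw [log_mul hε.ne' (by positivity), log_pow, log_div (by positivity) two_ne_zero,
      log_rpow hε]
    have hu2 : (u : ℝ) * log 2 ≤ (-log ε + 1) * 0.7 :=
      mul_le_mul hu (by linarith [log_two_lt_d9]) (log_nonneg one_le_two) (by linarith)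
    linarith [log_two_lt_d9]
  calc ε * ∑ k ∈ range u, (2 : ℝ) ^ k ≤ ε * 2 ^ u := by gcongr
    _ ≤ ε ^ (1 / 20 : ℝ) / 2 := (log_le_log_iff (by positivity) (by positivity)).1 hlog

lemma mul_geometric_tail_le_rpow {ε M : ℝ} (hε : 0 < ε) (hM : 0 < M)
    (hL : 60 * log (30 * M) ≤ -log ε) :
    M * (14 / 15 : ℝ) ^ ⌈-log ε⌉₊ / (1 - 14 / 15) ≤ ε ^ (1 / 20 : ℝ) / 2 := by
  set u := ⌈-log ε⌉₊
  have hu : -log ε ≤ u := Nat.le_ceil _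
  have h1415 : log (14 / 15 : ℝ) ≤ -(1 / 15) := by
    linarith [log_le_sub_one_of_pos (show (0 : ℝ) < 14 / 15 by norm_num)]
  have hlog : log (M * (14 / 15 : ℝ) ^ u / (1 - 14 / 15)) ≤ log (ε ^ (1 / 20 : ℝ) / 2) := by
    rw [log_div (by positivity) (by norm_num), log_mul hM.ne' (by positivity), log_pow,
      log_div (by positivity) two_ne_zero, log_rpow hε]
    rw [log_mul (by norm_num) hM.ne'] at hL
    have h30 : log 30 = -log (1 - 14 / 15 : ℝ) + log 2 := by
      rw [← log_inv, ← log_mul (by norm_num) two_ne_zero]; norm_num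
    have hdecay : (u : ℝ) * log (14 / 15) ≤ log ε / 15 :=
      (mul_le_mul_of_nonneg_left h1415 u.cast_nonneg).trans (by linarith)
    linarith
  exact (log_le_log_iff (by positivity) (by positivity)).1 hlog

lemma head_add_tail_le_rpow {ε A r : ℝ} {n : ℕ} (hε : 0 < ε) (hA : 1 ≤ A) (hn : 1 ≤ n)
    (hr0 : 0 < r) (hr : r ≤ 1 / 2) (hL : 1000 * (log A + n ^ 2 * |log r|) ≤ -log ε) :
    ε * ∑ k ∈ range ⌈-log ε⌉₊, (2 : ℝ) ^ k
      + A * r⁻¹ ^ (9 * n ^ 2) * (14 / 15 : ℝ) ^ ⌈-log ε⌉₊ / (1 - 14 / 15) ≤ ε ^ (1 / 20 : ℝ) := by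
  have hP : log 2 ≤ |log r| := by
    have := log_le_log hr0 hr
    rw [one_div, log_inv] at this
    linarith [neg_le_abs (log r)]
  have hn2 : (1 : ℝ) ≤ n ^ 2 := one_le_pow₀ (by exact_mod_cast hn)
  have hlogA : 0 ≤ log A := log_nonneg hA
  have hL6 : 6 ≤ -log ε := by nlinarith [log_two_gt_d9]
  have hL60 : 60 * log (30 * (A * r⁻¹ ^ (9 * n ^ 2))) ≤ -log ε := by
    have h30 : log 30 ≤ 5 * log 2 :=
      calc log 30 ≤ log (2 ^ 5) := log_le_log (by norm_num) (by norm_num)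
        _ = 5 * log 2 := by rw [log_pow]; norm_num
    have h1 : (n : ℝ) ^ 2 * -log r ≤ n ^ 2 * |log r| := by gcongr; exact neg_le_abs _
    have h2 : |log r| ≤ n ^ 2 * |log r| := le_mul_of_one_le_left (abs_nonneg _) hn2
    rw [log_mul (by norm_num) (by positivity), log_mul (by positivity) (by positivity), log_pow,
      log_inv]
    push_cast
    linarith
  linarith [add_halves (ε ^ (1 / 20 : ℝ)), mul_sum_range_two_pow_le_rpow hε hL6,
    mul_geometric_tail_le_rpow hε (by positivity) hL60]

theorem stmt13 :
    ∃ c₁₂ : ℝ, 0 < c₁₂ ∧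
      ∀ (f : ℕ → ℂ) (A : ℝ) (n : ℕ), 1 ≤ A → 1 ≤ n →
        (∀ k, ‖f k‖ ≤ A * ((k : ℝ) + 1) ^ n) →
        ∀ (c : ℂ) (ε : ℝ), ‖c‖ < 1 → 0 < ε → ε < 1 →
          (∀ z : ℂ, ‖z - c‖ < (1 - ‖c‖) / 2 → ‖∑' k : ℕ, f k * z ^ k‖ ≤ ε) →
          c₁₂ * (Real.log A + (n : ℝ) ^ 2 * |Real.log ((1 - ‖c‖) / 2)|) ≤ -Real.log ε →
          ∀ z : ℂ,
            ‖z - (if 1 / 5 < ‖c‖ then (((‖c‖ - (1 - ‖c‖) / 4) / ‖c‖ : ℝ) : ℂ) * c else 0)‖ <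
              (if 1 / 5 < ‖c‖ then 5 / 4 * ((1 - ‖c‖) / 2) else 1 / 2) →
            ‖∑' k : ℕ, f k * z ^ k‖ ≤ ε ^ ((1 : ℝ) / 20) := by
  refine ⟨1000, by norm_num, fun f A n hA hn hf c ε hc hε0 _ hsmall hlog z hz ↦ ?_⟩
  set r := (1 - ‖c‖) / 2 with hr_def
  have hr0 : 0 < r := by linarith
  have hr : r ≤ 1 / 2 := by linarith [norm_nonneg c]
  have hball (w : ℂ) (hw : w ∈ closedBall c (15 / 8 * r)) : ‖w‖ ≤ 1 - r / 8 := by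
    rw [mem_closedBall_iff_norm] at hw
    linarith [norm_le_norm_sub_add w c]
  have hF : DifferentiableOn ℂ (fun z ↦ ∑' k, f k * z ^ k) (closedBall c (15 / 8 * r)) :=
    (differentiableOn_tsum_mul_pow_of_growth hf).mono fun w hw ↦
      mem_ball_zero_iff.2 (by linarith [hball w hw])
  have hbound := norm_le_of_bound_on_two_spheres ⌈-log ε⌉₊ hF (R₁ := 7 / 8 * r) (by positivity)
    (by linarith) (fun w hw ↦ hsmall w (by rw [mem_sphere_iff_norm] at hw; linarith))
    (fun w hw ↦ norm_tsum_mul_pow_le_inv_pow hf hn hr0 hr (hball w (sphere_subset_closedBall hw)))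
    (norm_sub_le_of_mem_son hc.le hz) (by linarith)
  rw [add_sub_cancel, show 7 / 4 * r / (7 / 8 * r) = 2 by field_simp; norm_num,
    show 7 / 4 * r / (15 / 8 * r) = 14 / 15 by field_simp; norm_num] at hbound
  exact hbound.trans (head_add_tail_le_rpow hε0 hA hn hr0 hr hlog)
end

section
/- (Location of a zero near a slope.) Let f = 1 + Σ_{k≥1} f_k z^k have radius of convergence R > 0. If ξ ∈ D(0, R) is a zero of f, then there exists a slope σ of the Newton polygon of f (i.e., a value of the derivative 𝒩′ at a point of differentiability) such that |log|ξ| − σ| ≤ log 3. -/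
/-!
Put `u k = f k * ξ ^ k`, so that `log ‖u k‖ = log ‖f k‖ + k * log ‖ξ‖`. Since `u k → 0`, some `k₀`
maximizes `‖u k‖`, i.e. the line of slope `log ‖ξ‖` through the point of abscissa `k₀` of the
Newton cloud supports the cloud. As `∑ u k = 0` and `∑_{k ≠ k₀} 3 ^ (-|k - k₀|) < 1`, the term
`u k₀` cannot beat every other `u k` by the factor `3 ^ |k - k₀|`: some point `k₁` of the cloud lies
less than `log 3 * |k₁ - k₀|` above the supporting line. The Newton polygon is convex, lies above
the supporting line and touches it at `k₀`, while its chord from `k₀` to `k₁` has slope within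
`log 3` of `log ‖ξ‖`. Hence near `k₀`, on the side of `k₁`, every derivative of the polygon (and
convex functions are differentiable almost everywhere) is within `log 3` of `log ‖ξ‖`.
-/

open Set Filter MeasureTheory Topology Function

/-- The Newton polygon of a power series `f` with `f 0 = 1` : the pointwise supremum of
all affine functions lying below the Newton cloud `{(k, -log ‖f k‖) : f k ≠ 0}`. -/
noncomputable def newtonPolygon (f : ℕ → ℂ) (x : ℝ) : ℝ :=
  sSup {y : ℝ | ∃ a b : ℝ, y = a * x + b ∧
    ∀ k : ℕ, f k ≠ 0 → a * (k : ℝ) + b ≤ -Real.log ‖f k‖}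

theorem ConvexOn.exists_mem_Ioo_differentiableAt {φ : ℝ → ℝ} {a b : ℝ}
    (hφ : ConvexOn ℝ (Icc a b) φ) (hab : a < b) : ∃ x ∈ Ioo a b, DifferentiableAt ℝ φ x := by
  obtain ⟨c, hac, hcb⟩ := exists_between hab
  set m := (φ c - φ a) / (c - a)
  -- every secant over `[c, b]` is steeper than the one over `[a, c]`
  have hmono : MonotoneOn (fun x => φ x - m * x) (Icc c b) := by
    intro u hu v hv huv
    rcases huv.eq_or_lt with rfl | huv
    · rfl
    have hau : a < u := hac.trans_le hu.1
    have h₁ : m ≤ (φ u - φ a) / (u - a) :=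
      hφ.secant_mono (left_mem_Icc.2 hab.le) ⟨hac.le, hcb.le⟩ ⟨hau.le, hu.2⟩
        hac.ne' hau.ne' hu.1
    have h₂ : (φ u - φ a) / (u - a) ≤ (φ v - φ u) / (v - u) :=
      hφ.slope_mono_adjacent (left_mem_Icc.2 hab.le) ⟨(hau.trans huv).le, hv.2⟩ hau huv
    have h₃ := h₁.trans h₂
    rw [le_div_iff₀ (sub_pos.2 huv)] at h₃
    linarith
  have hae := (hmono.mono Ioo_subset_Icc_self).ae_differentiableWithinAt measurableSet_Ioo
  have : (ae (volume.restrict (Ioo c b))).NeBot := ae_restrict_neBot.2 (by simp [hcb])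
  obtain ⟨x, hd, hx⟩ := (hae.and (ae_restrict_mem measurableSet_Ioo)).exists
  refine ⟨x, ⟨hac.trans hx.1, hx.2⟩, ?_⟩
  have hdiff := (hd.differentiableAt (Ioo_mem_nhds hx.1 hx.2)).add (differentiableAt_id.const_mul m)
  exact hdiff.congr_of_eventuallyEq (.of_forall fun y => by simp)

theorem ConvexOn.exists_hasDerivAt_mem_Icc_of_support_left {φ : ℝ → ℝ} {a b m M : ℝ}
    (hφ : ConvexOn ℝ (Icc a b) φ) (hab : a < b)
    (hsupp : ∀ x ∈ Icc a b, φ a + m * (x - a) ≤ φ x) (hchord : φ b < φ a + M * (b - a)) :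
    ∃ x ∈ Ioo a b, ∃ σ ∈ Icc m M, HasDerivAt φ σ x := by
  -- near `a`, the supporting line bounds the secants ending at `b` by `M`
  have hev : ∀ᶠ x in 𝓝 a, (φ b - φ a - m * (x - a)) / (b - x) < M := by
    have hcont : ContinuousAt (fun x => (φ b - φ a - m * (x - a)) / (b - x)) a :=
      (by fun_prop : ContinuousAt (fun x => φ b - φ a - m * (x - a)) a).div (by fun_prop)
        (sub_ne_zero.2 hab.ne')
    refine hcont.eventually_lt continuousAt_const ?_
    rw [sub_self, mul_zero, sub_zero, div_lt_iff₀ (sub_pos.2 hab)]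
    linarith
  obtain ⟨c, hac, hc⟩ := mem_nhdsGT_iff_exists_Ioo_subset.1 (nhdsWithin_le_nhds hev)
  have hφc : ConvexOn ℝ (Icc a (min c b)) φ :=
    hφ.subset (Icc_subset_Icc_right (min_le_right c b)) (convex_Icc _ _)
  obtain ⟨x, hx, hd⟩ := hφc.exists_mem_Ioo_differentiableAt (lt_min hac hab)
  have hxb : x < b := hx.2.trans_le (min_le_right _ _)
  have hxI : x ∈ Icc a b := ⟨hx.1.le, hxb.le⟩
  refine ⟨x, ⟨hx.1, hxb⟩, deriv φ x, ⟨?_, ?_⟩, hd.hasDerivAt⟩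
  · refine le_trans ?_ (hφ.slope_le_of_hasDerivAt (left_mem_Icc.2 hab.le) hxI hx.1 hd.hasDerivAt)
    rw [slope_def_field, le_div_iff₀ (sub_pos.2 hx.1)]
    linarith [hsupp x hxI]
  · refine (hφ.le_slope_of_hasDerivAt hxI (right_mem_Icc.2 hab.le) hxb hd.hasDerivAt).trans ?_
    refine le_trans ?_ (hc ⟨hx.1, hx.2.trans_le (min_le_left _ _)⟩).le
    rw [slope_def_field]
    exact div_le_div_of_nonneg_right (by linarith [hsupp x hxI]) (sub_pos.2 hxb).le

theorem ConvexOn.exists_hasDerivAt_mem_Icc_of_support_right {φ : ℝ → ℝ} {a b m M : ℝ}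
    (hφ : ConvexOn ℝ (Icc a b) φ) (hab : a < b)
    (hsupp : ∀ x ∈ Icc a b, φ b + M * (x - b) ≤ φ x) (hchord : φ a < φ b + m * (a - b)) :
    ∃ x ∈ Ioo a b, ∃ σ ∈ Icc m M, HasDerivAt φ σ x := by
  have hψ : ConvexOn ℝ (Icc (-b) (-a)) (fun x => φ (-x)) := by
    have h := hφ.comp_linearMap (-LinearMap.id)
    rw [LinearMap.coe_neg, LinearMap.id_coe, show (-id : ℝ → ℝ) ⁻¹' Icc a b = -Icc a b from rfl,
      Set.neg_Icc] at h
    exact h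
  obtain ⟨y, hy, σ, hσ, hd⟩ := hψ.exists_hasDerivAt_mem_Icc_of_support_left (m := -M) (M := -m)
    (neg_lt_neg hab) (fun y hy => by
      simp only [neg_neg]; linarith [hsupp (-y) ⟨by linarith [hy.2], by linarith [hy.1]⟩])
    (by simp only [neg_neg]; linarith)
  refine ⟨-y, ⟨by linarith [hy.2], by linarith [hy.1]⟩, -σ,
    ⟨by linarith [hσ.2], by linarith [hσ.1]⟩, ?_⟩
  have h := HasDerivAt.comp (-y) (by rwa [neg_neg] : HasDerivAt (fun x => φ (-x)) σ (- -y))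
    (hasDerivAt_neg' (-y))
  simpa only [Function.comp_def, neg_neg, mul_neg, mul_one] using h

theorem affine_le_max_of_mem_Icc {a b p q x : ℝ} (hx : x ∈ Icc p q) :
    a * x + b ≤ max (a * p + b) (a * q + b) := by
  rcases le_total 0 a with ha | ha
  · exact le_max_of_le_right (by nlinarith [hx.2])
  · exact le_max_of_le_left (by nlinarith [hx.1])

def IsBelowNewtonCloud (f : ℕ → ℂ) (a b : ℝ) : Prop :=
  ∀ k : ℕ, f k ≠ 0 → a * k + b ≤ -Real.log ‖f k‖

section NewtonPolygon

variable {f : ℕ → ℂ} {n : ℕ}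

theorem bddAbove_setOf_isBelowNewtonCloud (h0 : f 0 ≠ 0) (hn : f n ≠ 0) {x : ℝ}
    (hx : x ∈ Icc 0 (n : ℝ)) :
    BddAbove {y : ℝ | ∃ a b : ℝ, y = a * x + b ∧ IsBelowNewtonCloud f a b} := by
  refine ⟨max (-Real.log ‖f 0‖) (-Real.log ‖f n‖), ?_⟩
  rintro _ ⟨a, b, rfl, hab⟩
  refine (affine_le_max_of_mem_Icc hx).trans (max_le_max ?_ (hab n hn))
  simpa using hab 0 h0

theorem IsBelowNewtonCloud.le_newtonPolygon {a b : ℝ} (hab : IsBelowNewtonCloud f a b)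
    (h0 : f 0 ≠ 0) (hn : f n ≠ 0) {x : ℝ} (hx : x ∈ Icc 0 (n : ℝ)) :
    a * x + b ≤ newtonPolygon f x :=
  le_csSup (bddAbove_setOf_isBelowNewtonCloud h0 hn hx) ⟨a, b, rfl, hab⟩

theorem IsBelowNewtonCloud.newtonPolygon_le {a b : ℝ} (hab : IsBelowNewtonCloud f a b) {k : ℕ}
    (hk : f k ≠ 0) : newtonPolygon f k ≤ -Real.log ‖f k‖ := by
  refine csSup_le ⟨_, a, b, rfl, hab⟩ ?_
  rintro _ ⟨a', b', rfl, hab'⟩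
  exact hab' k hk

theorem IsBelowNewtonCloud.convexOn_newtonPolygon {a b : ℝ} (hab : IsBelowNewtonCloud f a b)
    (h0 : f 0 ≠ 0) (hn : f n ≠ 0) : ConvexOn ℝ (Icc 0 (n : ℝ)) (newtonPolygon f) := by
  refine ⟨convex_Icc _ _, fun x hx y hy p q hp hq hpq => ?_⟩
  refine csSup_le ⟨_, a, b, rfl, hab⟩ ?_
  rintro _ ⟨a', b', rfl, hab'⟩
  have hx' := IsBelowNewtonCloud.le_newtonPolygon hab' h0 hn hx
  have hy' := IsBelowNewtonCloud.le_newtonPolygon hab' h0 hn hy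
  calc a' * (p • x + q • y) + b' = p * (a' * x + b') + q * (a' * y + b') := by
        rw [smul_eq_mul, smul_eq_mul]; linear_combination -b' * hpq
    _ ≤ p • newtonPolygon f x + q • newtonPolygon f y := by
        rw [smul_eq_mul, smul_eq_mul]; gcongr

end NewtonPolygon

theorem exists_hasDerivAt_newtonPolygon_near {f : ℕ → ℂ} (h0 : f 0 ≠ 0) {i j : ℕ} (hi : f i ≠ 0)
    (hj : f j ≠ 0) (hij : i ≠ j) {t L : ℝ}
    (hsupp : ∀ k : ℕ, f k ≠ 0 → -Real.log ‖f i‖ + t * (k - i) ≤ -Real.log ‖f k‖)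
    (hlt : -Real.log ‖f j‖ < -Real.log ‖f i‖ + t * (j - i) + L * |(j : ℝ) - i|) :
    ∃ x ∈ Ioo ((min i j : ℕ) : ℝ) (max i j : ℕ), ∃ σ,
      HasDerivAt (newtonPolygon f) σ x ∧ |t - σ| ≤ L := by
  have hab : IsBelowNewtonCloud f t (-Real.log ‖f i‖ - t * i) := fun k hk => by
    linarith [hsupp k hk]
  have hn : f (max i j) ≠ 0 := max_rec' (f · ≠ 0) hi hj
  have hconv := hab.convexOn_newtonPolygon h0 hn
  have hlow : ∀ x ∈ Icc 0 ((max i j : ℕ) : ℝ),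
      newtonPolygon f i + t * (x - i) ≤ newtonPolygon f x := by
    intro x hx
    have := hab.le_newtonPolygon h0 hn hx
    linarith [hab.newtonPolygon_le hi]
  have hNi : newtonPolygon f i = -Real.log ‖f i‖ := le_antisymm (hab.newtonPolygon_le hi) <| by
    simpa using hab.le_newtonPolygon h0 hn (x := i)
      ⟨i.cast_nonneg, by exact_mod_cast le_max_left i j⟩
  have hNj := hab.newtonPolygon_le hj
  rcases hij.lt_or_gt with h | h
  · have hIcc : Icc (i : ℝ) j ⊆ Icc 0 ((max i j : ℕ) : ℝ) :=
      Icc_subset_Icc i.cast_nonneg (by exact_mod_cast le_max_right i j)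
    obtain ⟨x, hx, σ, hσ, hd⟩ := (hconv.subset hIcc (convex_Icc _ _))
      |>.exists_hasDerivAt_mem_Icc_of_support_left (m := t) (M := t + L) (by exact_mod_cast h)
        (fun x hx => hlow x (hIcc hx))
        (by rw [abs_of_pos (sub_pos.2 (by exact_mod_cast h))] at hlt; linarith)
    refine ⟨x, by simpa [h.le] using hx, σ, hd, abs_le.2 ⟨?_, ?_⟩⟩ <;> linarith [hσ.1, hσ.2]
  · have hIcc : Icc (j : ℝ) i ⊆ Icc 0 ((max i j : ℕ) : ℝ) :=
      Icc_subset_Icc j.cast_nonneg (by exact_mod_cast le_max_left i j)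
    obtain ⟨x, hx, σ, hσ, hd⟩ := (hconv.subset hIcc (convex_Icc _ _))
      |>.exists_hasDerivAt_mem_Icc_of_support_right (m := t - L) (M := t) (by exact_mod_cast h)
        (fun x hx => hlow x (hIcc hx))
        (by rw [abs_of_neg (sub_neg.2 (by exact_mod_cast h))] at hlt; linarith)
    refine ⟨x, by simpa [h.le] using hx, σ, hd, abs_le.2 ⟨?_, ?_⟩⟩ <;> linarith [hσ.1, hσ.2]

theorem hasSum_update_inv_three_pow_dist (k₀ : ℕ) :
    HasSum (update (fun k => (3 : ℝ)⁻¹ ^ Nat.dist k k₀) k₀ 0) (1 - 3⁻¹ ^ k₀ / 2) := by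
  rw [← hasSum_nat_add_iff' (k₀ + 1)]
  have htail : ∀ n, update (fun k => (3 : ℝ)⁻¹ ^ Nat.dist k k₀) k₀ 0 (n + (k₀ + 1))
      = 3⁻¹ * 3⁻¹ ^ n := fun n => by
    rw [update_of_ne (by omega), Nat.dist_eq_sub_of_le_right (by omega), ← pow_succ']
    congr 1
    omega
  have hhead : ∑ i ∈ Finset.range (k₀ + 1), update (fun k => (3 : ℝ)⁻¹ ^ Nat.dist k k₀) k₀ 0 i
      = (1 - 3⁻¹ ^ k₀) / 2 := by
    rw [Finset.sum_range_succ, update_self, add_zero,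
      ← Finset.sum_range_reflect _ k₀]
    calc ∑ j ∈ Finset.range k₀, update (fun k => (3 : ℝ)⁻¹ ^ Nat.dist k k₀) k₀ 0 (k₀ - 1 - j)
        = ∑ j ∈ Finset.range k₀, 3⁻¹ * (3 : ℝ)⁻¹ ^ j := by
          refine Finset.sum_congr rfl fun j hj => ?_
          rw [Finset.mem_range] at hj
          rw [update_of_ne (by omega), Nat.dist_eq_sub_of_le (by omega), ← pow_succ']
          congr 1
          omega
      _ = (1 - 3⁻¹ ^ k₀) / 2 := by
          rw [← Finset.mul_sum, geom_sum_eq (by norm_num)]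
          ring
  simp only [htail, hhead]
  have h := (hasSum_geometric_of_lt_one (r := (3 : ℝ)⁻¹) (by norm_num) (by norm_num)).mul_left 3⁻¹
  rwa [show (3 : ℝ)⁻¹ * (1 - 3⁻¹)⁻¹ = 1 - 3⁻¹ ^ k₀ / 2 - (1 - 3⁻¹ ^ k₀) / 2 by ring] at h

theorem exists_ne_norm_lt_three_pow_dist_mul {E : Type*} [NormedAddCommGroup E] {u : ℕ → E}
    (hu : HasSum u 0) {k₀ : ℕ} (hk₀ : u k₀ ≠ 0) :
    ∃ k ≠ k₀, ‖u k₀‖ < 3 ^ Nat.dist k k₀ * ‖u k‖ := by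
  by_contra! h
  have hupd : HasSum (update u k₀ 0) (-u k₀) := by simpa using hu.update k₀ 0
  have hle : ‖-u k₀‖ ≤ ‖u k₀‖ * (1 - 3⁻¹ ^ k₀ / 2) := by
    refine hupd.norm_le_of_bounded ((hasSum_update_inv_three_pow_dist k₀).mul_left _) fun k => ?_
    rcases eq_or_ne k k₀ with rfl | hk
    · simp
    · rw [update_of_ne hk, update_of_ne hk, inv_pow, ← div_eq_mul_inv,
        le_div_iff₀ (by positivity), mul_comm]
      exact h k hk
  rw [norm_neg] at hle
  have : 0 < ‖u k₀‖ * (3⁻¹ ^ k₀ / 2) := by positivity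
  linarith

theorem Nat.cast_dist {R : Type*} [Ring R] [LinearOrder R] [IsOrderedRing R] (i j : ℕ) :
    (Nat.dist i j : R) = |(i : R) - j| := by
  rcases le_total i j with h | h
  · rw [Nat.dist_eq_sub_of_le h, Nat.cast_sub h,
      abs_of_nonpos (sub_nonpos.2 (Nat.mono_cast h)), neg_sub]
  · rw [Nat.dist_eq_sub_of_le_right h, Nat.cast_sub h,
      abs_of_nonneg (sub_nonneg.2 (Nat.mono_cast h))]

theorem Real.log_norm_mul_pow {𝕜 : Type*} [NormedDivisionRing 𝕜] {a b : 𝕜} (ha : a ≠ 0)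
    (hb : b ≠ 0) (k : ℕ) : Real.log ‖a * b ^ k‖ = Real.log ‖a‖ + k * Real.log ‖b‖ := by
  rw [norm_mul, norm_pow,
    Real.log_mul (norm_ne_zero_iff.2 ha) (pow_ne_zero _ (norm_ne_zero_iff.2 hb)), Real.log_pow]

theorem summable_norm_mul_pow_of_norm_le_div_pow {𝕜 : Type*} [NormedDivisionRing 𝕜]
    {f : ℕ → 𝕜} {C ρ : ℝ} (hf : ∀ m, ‖f m‖ ≤ C / ρ ^ m) {ξ : 𝕜} (hξ : ‖ξ‖ < ρ) :
    Summable fun k => ‖f k * ξ ^ k‖ := by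
  have hρ : 0 < ρ := (norm_nonneg ξ).trans_lt hξ
  refine .of_nonneg_of_le (fun _ => norm_nonneg _) (fun k => ?_)
    ((summable_geometric_of_lt_one (by positivity) ((div_lt_one hρ).2 hξ)).mul_left C)
  rw [norm_mul, norm_pow, div_pow, mul_div, ← div_mul_eq_mul_div]
  exact mul_le_mul_of_nonneg_right (hf k) (by positivity)

theorem exists_forall_le_of_tendsto_zero {g : ℕ → ℝ} (hg : Tendsto g atTop (𝓝 0)) {i : ℕ}
    (hi : 0 < g i) : ∃ k₀, ∀ k, g k ≤ g k₀ :=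
  continuous_of_discreteTopology.exists_forall_ge' i <| by
    rw [cocompact_eq_atTop]
    exact (hg.eventually (gt_mem_nhds hi)).mono fun _ h => h.le

theorem exists_hasDerivAt_newtonPolygon_of_forall_norm_le {f : ℕ → ℂ} (h0 : f 0 ≠ 0) {ξ : ℂ}
    (hξ : ξ ≠ 0) {k₀ k₁ : ℕ} (hk₀ : f k₀ ≠ 0) (hne : k₁ ≠ k₀)
    (hmax : ∀ k, ‖f k * ξ ^ k‖ ≤ ‖f k₀ * ξ ^ k₀‖)
    (hdom : ‖f k₀ * ξ ^ k₀‖ < 3 ^ Nat.dist k₁ k₀ * ‖f k₁ * ξ ^ k₁‖) :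
    ∃ σ x : ℝ, 0 ≤ x ∧ (∃ k : ℕ, f k ≠ 0 ∧ x ≤ (k : ℝ)) ∧
      HasDerivAt (newtonPolygon f) σ x ∧ |Real.log ‖ξ‖ - σ| ≤ Real.log 3 := by
  have hk₁ : f k₁ ≠ 0 := fun h => by
    rw [h, zero_mul, norm_zero, mul_zero] at hdom
    exact (norm_nonneg _).not_gt hdom
  have hlog (k : ℕ) (hk : f k ≠ 0) := Real.log_norm_mul_pow hk hξ k
  have hsupp (k : ℕ) (hk : f k ≠ 0) :
      -Real.log ‖f k₀‖ + Real.log ‖ξ‖ * (k - k₀) ≤ -Real.log ‖f k‖ := by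
    have := Real.log_le_log (norm_pos_iff.2 (mul_ne_zero hk (pow_ne_zero _ hξ))) (hmax k)
    rw [hlog k hk, hlog k₀ hk₀] at this
    linarith
  have hlt : -Real.log ‖f k₁‖ <
      -Real.log ‖f k₀‖ + Real.log ‖ξ‖ * (k₁ - k₀) + Real.log 3 * |(k₁ : ℝ) - k₀| := by
    have := Real.log_lt_log (by simp [hk₀, hξ]) hdom
    rw [Real.log_mul (by positivity) (by simp [hk₁, hξ]), Real.log_pow, hlog k₁ hk₁, hlog k₀ hk₀,
      Nat.cast_dist] at this
    linarith
  obtain ⟨x, hx, σ, hd, hσ⟩ := exists_hasDerivAt_newtonPolygon_near h0 hk₀ hk₁ hne.symm hsupp hlt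
  exact ⟨σ, x, (Nat.cast_nonneg _).trans hx.1.le, ⟨_, max_rec' (f · ≠ 0) hk₀ hk₁, hx.2.le⟩, hd, hσ⟩

theorem stmt16_general (f : ℕ → ℂ) (hf0 : f 0 = 1) (C ρ : ℝ)
    (hconv : ∀ m, ‖f m‖ ≤ C / ρ ^ m)
    (ξ : ℂ) (hξ : ‖ξ‖ < ρ) (hzero : (∑' k : ℕ, f k * ξ ^ k) = 0) :
    ∃ σ x : ℝ, 0 ≤ x ∧ (∃ k : ℕ, f k ≠ 0 ∧ x ≤ (k : ℝ)) ∧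
      HasDerivAt (newtonPolygon f) σ x ∧ |Real.log ‖ξ‖ - σ| ≤ Real.log 3 := by
  have hξ0 : ξ ≠ 0 := by
    rintro rfl
    rw [tsum_eq_single 0 fun k hk => by simp [hk]] at hzero
    simp [hf0] at hzero
  have hsum := summable_norm_mul_pow_of_norm_le_div_pow hconv hξ
  have hu : HasSum (fun k => f k * ξ ^ k) 0 := hzero ▸ hsum.of_norm.hasSum
  obtain ⟨k₀, hmax⟩ := exists_forall_le_of_tendsto_zero hsum.tendsto_atTop_zero (i := 0)
    (by simp [hf0])
  have hk₀ : f k₀ ≠ 0 := fun h => by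
    have h0 := hmax 0
    rw [h, hf0] at h0
    norm_num at h0
  obtain ⟨k₁, hne, hdom⟩ :=
    exists_ne_norm_lt_three_pow_dist_mul hu (mul_ne_zero hk₀ (pow_ne_zero _ hξ0))
  exact exists_hasDerivAt_newtonPolygon_of_forall_norm_le (by simp [hf0]) hξ0 hk₀ hne hmax hdom

theorem stmt16 (f : ℕ → ℂ) (hf0 : f 0 = 1) (C ρ : ℝ) (hρ : 0 < ρ)
    (hconv : ∀ m, ‖f m‖ ≤ C / ρ ^ m)
    (ξ : ℂ) (hξ : ‖ξ‖ < ρ) (hzero : (∑' k : ℕ, f k * ξ ^ k) = 0) :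
    ∃ σ x : ℝ, 0 ≤ x ∧ (∃ k : ℕ, f k ≠ 0 ∧ x ≤ (k : ℝ)) ∧
      HasDerivAt (newtonPolygon f) σ x ∧ |Real.log ‖ξ‖ - σ| ≤ Real.log 3 :=
  stmt16_general f hf0 C ρ hconv ξ hξ hzero
end
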